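/- Constrained minimal tilings: let D be a domain, S a set of interior vertices of D, and h : S → ℤ a prescription of heights. If there exists at least one tiling T of D with h_T(v) = h(v) for all v ∈ S, then among all such tilings there is a smallest one T_S (smallest for the order ≤), and the height function of T_S has no local maximum at any interior vertex outside S. -/

import Mathlib

namespace DominoTiling

/-!
Domino tilings of simply connected domains in the square lattice,
following Desreux–Rémila, "An optimal algorithm to generate tilings".
-/

abbrev Cell : Type := ℤ × ℤ
abbrev Vertex : Type := ℤ × ℤ

/-- The closed unit square of the cell with lower-left corner `c`. -/
def cellSquare (c : Cell) : Set (ℝ × ℝ) :=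
  Set.Icc ((c.1 : ℝ), (c.2 : ℝ)) ((c.1 : ℝ) + 1, (c.2 : ℝ) + 1)

/-- The closed union of the cells of `D`. -/
def regionOf (D : Set Cell) : Set (ℝ × ℝ) :=
  ⋃ c ∈ D, cellSquare c

/-- A domain: a finite nonempty set of cells whose union is a simply connected
subset of the plane. -/
structure IsDomain (D : Set Cell) : Prop where
  finite : D.Finite
  nonempty : D.Nonempty
  simplyConnected : SimplyConnectedSpace (regionOf D)

def embedV (v : Vertex) : ℝ × ℝ := ((v.1 : ℝ), (v.2 : ℝ))

/-- The four corners of a cell. -/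
def cornersOf (c : Cell) : Set Vertex :=
  {c, (c.1 + 1, c.2), (c.1, c.2 + 1), (c.1 + 1, c.2 + 1)}

/-- A vertex of `D`: a point of `ℤ²` lying in the closed union of `D`. -/
def IsVertexOf (D : Set Cell) (v : Vertex) : Prop :=
  embedV v ∈ regionOf D

/-- A boundary vertex of `D`: a vertex on the topological boundary of the union. -/
def IsBoundaryVertexOf (D : Set Cell) (v : Vertex) : Prop :=
  IsVertexOf D v ∧ embedV v ∈ frontier (regionOf D)

/-- An interior vertex of `D`: a vertex not on the topological boundary. -/
def IsInteriorVertexOf (D : Set Cell) (v : Vertex) : Prop :=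
  IsVertexOf D v ∧ embedV v ∉ frontier (regionOf D)

/-- Directed lattice edges, directed clockwise around black cells (cells whose
coordinate sum is even), equivalently counterclockwise around white cells:
vertical edges leave vertices of even coordinate sum, horizontal edges leave
vertices of odd coordinate sum. -/
def IsDirEdge (v w : Vertex) : Prop :=
  (Even (v.1 + v.2) ∧ (w = (v.1, v.2 + 1) ∨ w = (v.1, v.2 - 1))) ∨
  (¬ Even (v.1 + v.2) ∧ (w = (v.1 + 1, v.2) ∨ w = (v.1 - 1, v.2)))

/-- A directed lattice edge lying in the closed union of `D` (equivalently, its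
two endpoints are corners of a common cell of `D`). -/
def EdgeInDomain (D : Set Cell) (v w : Vertex) : Prop :=
  IsDirEdge v w ∧ ∃ c ∈ D, v ∈ cornersOf c ∧ w ∈ cornersOf c

/-- A domino: a union of two cells sharing an edge. -/
def IsDomino (d : Set Cell) : Prop :=
  ∃ a b : ℤ, d = {(a, b), (a + 1, b)} ∨ d = {(a, b), (a, b + 1)}

/-- The central axis of a domino, as an unordered pair `{v, w}` of vertices:
the common side of its two cells. -/
def IsCentralAxis (d : Set Cell) (v w : Vertex) : Prop :=
  ∃ a b : ℤ,
    (d = {(a, b), (a + 1, b)} ∧ ({v, w} : Set Vertex) = {(a + 1, b), (a + 1, b + 1)}) ∨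
    (d = {(a, b), (a, b + 1)} ∧ ({v, w} : Set Vertex) = {(a, b + 1), (a + 1, b + 1)})

/-- A tiling of `D`: a set of dominoes that partitions `D`. -/
def IsTiling (D : Set Cell) (T : Set (Set Cell)) : Prop :=
  (∀ d ∈ T, IsDomino d) ∧ T.PairwiseDisjoint id ∧ ⋃₀ T = D

/-- `h` is a height function for the tiling `T` of `D` with origin `O`:
`h O = 0`, and along every directed edge `(v, w)` lying in the closed union of
`D`, `h w = h v - 3` if the edge is the central axis of a domino of `T`, and
`h w = h v + 1` otherwise. -/
def IsHeightFunction (D : Set Cell) (O : Vertex) (T : Set (Set Cell))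
    (h : Vertex → ℤ) : Prop :=
  h O = 0 ∧
  ∀ v w : Vertex, EdgeInDomain D v w →
    ((∃ d ∈ T, IsCentralAxis d v w) → h w = h v - 3) ∧
    (¬ (∃ d ∈ T, IsCentralAxis d v w) → h w = h v + 1)

/-- The order on tilings: `T ≤ T'` iff `h_T ≤ h_{T'}` pointwise on the
vertices of `D`. -/
def TilingLE (D : Set Cell) (O : Vertex) (T T' : Set (Set Cell)) : Prop :=
  ∀ h h' : Vertex → ℤ, IsHeightFunction D O T h → IsHeightFunction D O T' h' →
    ∀ v : Vertex, IsVertexOf D v → h v ≤ h' v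

/-- The two horizontal dominoes filling the 2×2 square of cells centered at
the vertex `v`. -/
def hDominoes (v : Vertex) : Set (Set Cell) :=
  { {(v.1 - 1, v.2 - 1), (v.1, v.2 - 1)}, {(v.1 - 1, v.2), (v.1, v.2)} }

/-- The two vertical dominoes filling the 2×2 square of cells centered at
the vertex `v`. -/
def vDominoes (v : Vertex) : Set (Set Cell) :=
  { {(v.1 - 1, v.2 - 1), (v.1 - 1, v.2)}, {(v.1, v.2 - 1), (v.1, v.2)} }

/-- Upward flip at the interior vertex `v`: the two dominoes of `T` whose
central axes are the directed edges ending at `v` are replaced by the two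
other dominoes covering the same 2×2 square, whose central axes are the
directed edges starting at `v`. -/
def UpwardFlip (D : Set Cell) (v : Vertex) (T T' : Set (Set Cell)) : Prop :=
  IsInteriorVertexOf D v ∧
  ((Even (v.1 + v.2) ∧ vDominoes v ⊆ T ∧ T' = (T \ vDominoes v) ∪ hDominoes v) ∨
   (¬ Even (v.1 + v.2) ∧ hDominoes v ⊆ T ∧ T' = (T \ hDominoes v) ∪ vDominoes v))

/-- A flip is an upward flip or a downward flip (the reverse operation). -/
def Flip (D : Set Cell) (v : Vertex) (T T' : Set (Set Cell)) : Prop :=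
  UpwardFlip D v T T' ∨ UpwardFlip D v T' T

/-- `w` is one of the four lattice neighbours of `v`. -/
def Adjacent (v w : Vertex) : Prop :=
  w = (v.1 + 1, v.2) ∨ w = (v.1 - 1, v.2) ∨ w = (v.1, v.2 + 1) ∨ w = (v.1, v.2 - 1)

/-- `v` is a local maximum of `h`: an interior vertex whose height exceeds the
heights of its four neighbours. -/
def IsLocalMax (D : Set Cell) (h : Vertex → ℤ) (v : Vertex) : Prop :=
  IsInteriorVertexOf D v ∧ ∀ w : Vertex, Adjacent v w → h w < h v

/-- `v` is a local minimum of `h`: an interior vertex whose height is below the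
heights of its four neighbours. -/
def IsLocalMin (D : Set Cell) (h : Vertex → ℤ) (v : Vertex) : Prop :=
  IsInteriorVertexOf D v ∧ ∀ w : Vertex, Adjacent v w → h v < h w

/-!
A function on the vertices is the height function of a tiling of `D` iff it vanishes at `O`,
changes by `-3` or `+1` along each directed edge, and each edge along which it drops by `3`
is the central axis of a domino inside `D`; the tiling is then formed by those dominoes.
Since `D` is connected, all such functions agree modulo `4`, which makes the pointwise minimum
of two of them again one of them. The smallest tiling with the prescribed heights on `S` is
therefore the one whose height function is the minimum over the finitely many such tilings.
Lowering a local maximum outside `S` by `4` (a downward flip) would produce a smaller one.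
-/

lemma mem_cornersOf_iff {v : Vertex} {c : Cell} :
    v ∈ cornersOf c ↔ c.1 ≤ v.1 ∧ v.1 ≤ c.1 + 1 ∧ c.2 ≤ v.2 ∧ v.2 ≤ c.2 + 1 := by
  obtain ⟨x, y⟩ := v
  simp only [cornersOf, Set.mem_insert_iff, Set.mem_singleton_iff, Prod.ext_iff]
  omega

lemma embedV_mem_cellSquare_iff {v : Vertex} {c : Cell} :
    embedV v ∈ cellSquare c ↔ v ∈ cornersOf c := by
  simp only [cellSquare, embedV, Set.mem_Icc, Prod.le_def, mem_cornersOf_iff]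
  norm_cast
  tauto

lemma isVertexOf_iff {D : Set Cell} {v : Vertex} :
    IsVertexOf D v ↔ ∃ c ∈ D, v ∈ cornersOf c := by
  simp only [IsVertexOf, regionOf, Set.mem_iUnion₂, embedV_mem_cellSquare_iff, exists_prop]

lemma isDirEdge_iff {v w : Vertex} :
    IsDirEdge v w ↔ (v.1 + v.2) % 2 = 0 ∧ w.1 = v.1 ∧ (w.2 = v.2 + 1 ∨ w.2 = v.2 - 1) ∨
      (v.1 + v.2) % 2 = 1 ∧ w.2 = v.2 ∧ (w.1 = v.1 + 1 ∨ w.1 = v.1 - 1) := by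
  simp only [IsDirEdge, Int.even_iff, Prod.ext_iff]
  omega

lemma IsDirEdge.not_symm {v w : Vertex} (h : IsDirEdge v w) : ¬ IsDirEdge w v := by
  rw [isDirEdge_iff] at *
  omega

lemma IsDirEdge.adjacent {v w : Vertex} (h : IsDirEdge v w) : Adjacent v w ∧ Adjacent w v := by
  rw [isDirEdge_iff] at h
  simp only [Adjacent, Prod.ext_iff]
  omega

lemma Adjacent.ne {v w : Vertex} (h : Adjacent v w) : w ≠ v := by
  simp only [Adjacent, Prod.ext_iff] at h
  simp only [ne_eq, Prod.ext_iff]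
  omega

lemma cornersOf_cycle (c : Cell) : ∃ p₀ p₁ p₂ p₃ : Vertex,
    (∀ v, v ∈ cornersOf c ↔ v = p₀ ∨ v = p₁ ∨ v = p₂ ∨ v = p₃) ∧
    ∀ v ∈ cornersOf c, ∀ w ∈ cornersOf c, IsDirEdge v w ↔
      (v, w) = (p₀, p₁) ∨ (v, w) = (p₁, p₂) ∨ (v, w) = (p₂, p₃) ∨ (v, w) = (p₃, p₀) := by
  obtain ⟨a, b⟩ := c
  rcases Int.emod_two_eq_zero_or_one (a + b) with hab | hab
  · refine ⟨(a, b), (a, b + 1), (a + 1, b + 1), (a + 1, b), fun v => ?_, fun v hv w hw => ?_⟩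
    · simp only [mem_cornersOf_iff, Prod.ext_iff]; omega
    · simp only [mem_cornersOf_iff, isDirEdge_iff, Prod.ext_iff] at *; omega
  · refine ⟨(a, b), (a + 1, b), (a + 1, b + 1), (a, b + 1), fun v => ?_, fun v hv w hw => ?_⟩
    · simp only [mem_cornersOf_iff, Prod.ext_iff]; omega
    · simp only [mem_cornersOf_iff, isDirEdge_iff, Prod.ext_iff] at *; omega

lemma IsCentralAxis.isDomino {d : Set Cell} {v w : Vertex} (h : IsCentralAxis d v w) :
    IsDomino d := by
  obtain ⟨a, b, ⟨hd, -⟩ | ⟨hd, -⟩⟩ := h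
  exacts [⟨a, b, Or.inl hd⟩, ⟨a, b, Or.inr hd⟩]

lemma IsCentralAxis.mem_cornersOf {d : Set Cell} {v w : Vertex} {c : Cell}
    (h : IsCentralAxis d v w) (hc : c ∈ d) : v ∈ cornersOf c ∧ w ∈ cornersOf c := by
  have hv : v ∈ ({v, w} : Set Vertex) := Set.mem_insert v _
  have hw : w ∈ ({v, w} : Set Vertex) := Set.mem_insert_of_mem v rfl
  obtain ⟨a, b, ⟨rfl, hvw⟩ | ⟨rfl, hvw⟩⟩ := h <;> rw [hvw] at hv hw <;>
    simp only [Set.mem_insert_iff, Set.mem_singleton_iff, Prod.ext_iff] at hc hv hw <;>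
    simp only [mem_cornersOf_iff] <;> omega

lemma IsCentralAxis.mem_of_mem_cornersOf {d : Set Cell} {v w : Vertex} {c : Cell}
    (h : IsCentralAxis d v w) (hv : v ∈ cornersOf c) (hw : w ∈ cornersOf c) : c ∈ d := by
  rw [mem_cornersOf_iff] at hv hw
  obtain ⟨a, b, ⟨rfl, hvw⟩ | ⟨rfl, hvw⟩⟩ := h <;>
    rw [Set.pair_eq_pair_iff] at hvw <;>
    simp only [Set.mem_insert_iff, Set.mem_singleton_iff, Prod.ext_iff] at hvw ⊢ <;> omega

lemma IsCentralAxis.eq {d d' : Set Cell} {v w : Vertex} (h : IsCentralAxis d v w)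
    (h' : IsCentralAxis d' v w) : d = d' :=
  Set.Subset.antisymm (fun _ hc => h'.mem_of_mem_cornersOf (h.mem_cornersOf hc).1
      (h.mem_cornersOf hc).2)
    (fun _ hc => h.mem_of_mem_cornersOf (h'.mem_cornersOf hc).1 (h'.mem_cornersOf hc).2)

lemma IsCentralAxis.pair_eq {d : Set Cell} {v w v' w' : Vertex} (h : IsCentralAxis d v w)
    (h' : IsCentralAxis d v' w') : ({v, w} : Set Vertex) = {v', w'} := by
  obtain ⟨a, b, ⟨rfl, hvw⟩ | ⟨rfl, hvw⟩⟩ := h <;>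
  obtain ⟨a', b', ⟨hd, hvw'⟩ | ⟨hd, hvw'⟩⟩ := h' <;>
  rw [Set.pair_eq_pair_iff] at hd <;> simp only [Prod.ext_iff] at hd <;>
  obtain ⟨rfl, rfl⟩ : a = a' ∧ b = b' := by omega
  all_goals first | exact hvw.trans hvw'.symm | omega

lemma Adjacent.exists_isCentralAxis {v w : Vertex} (h : Adjacent v w) :
    ∃ d, IsCentralAxis d v w := by
  obtain ⟨x, y⟩ := v
  rcases h with rfl | rfl | rfl | rfl
  · exact ⟨_, x, y - 1, Or.inr ⟨rfl, by simp⟩⟩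
  · exact ⟨_, x - 1, y - 1, Or.inr ⟨rfl, by simp [Set.pair_comm]⟩⟩
  · exact ⟨_, x - 1, y, Or.inl ⟨rfl, by simp⟩⟩
  · exact ⟨_, x - 1, y - 1, Or.inl ⟨rfl, by simp [Set.pair_comm]⟩⟩

lemma EdgeInDomain.isVertexOf {D : Set Cell} {v w : Vertex} (h : EdgeInDomain D v w) :
    IsVertexOf D v ∧ IsVertexOf D w := by
  obtain ⟨-, c, hc, hv, hw⟩ := h
  exact ⟨isVertexOf_iff.2 ⟨c, hc, hv⟩, isVertexOf_iff.2 ⟨c, hc, hw⟩⟩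

lemma eqvGen_of_mem_cornersOf {D : Set Cell} {c : Cell} (hc : c ∈ D) {v w : Vertex}
    (hv : v ∈ cornersOf c) (hw : w ∈ cornersOf c) :
    Relation.EqvGen (EdgeInDomain D) v w := by
  obtain ⟨p₀, p₁, p₂, p₃, hcorners, hedge⟩ := cornersOf_cycle c
  have m₀ := (hcorners p₀).2 (by simp)
  have m₁ := (hcorners p₁).2 (by simp)
  have m₂ := (hcorners p₂).2 (by simp)
  have m₃ := (hcorners p₃).2 (by simp)
  have h₁ : Relation.EqvGen (EdgeInDomain D) p₀ p₁ :=
    .rel _ _ ⟨(hedge _ m₀ _ m₁).2 (by simp), c, hc, m₀, m₁⟩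
  have h₂ := h₁.trans _ _ _ (.rel _ _ ⟨(hedge _ m₁ _ m₂).2 (by simp), c, hc, m₁, m₂⟩)
  have h₃ := h₂.trans _ _ _ (.rel _ _ ⟨(hedge _ m₂ _ m₃).2 (by simp), c, hc, m₂, m₃⟩)
  have from_p₀ : ∀ u ∈ cornersOf c, Relation.EqvGen (EdgeInDomain D) p₀ u := by
    intro u hu
    rcases (hcorners u).1 hu with rfl | rfl | rfl | rfl
    exacts [.refl _, h₁, h₂, h₃]
  exact ((from_p₀ v hv).symm _ _).trans _ _ _ (from_p₀ w hw)

lemma exists_mem_cornersOf_of_mem_cellSquare {c c' : Cell} {x : ℝ × ℝ}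
    (h : x ∈ cellSquare c) (h' : x ∈ cellSquare c') :
    ∃ v : Vertex, v ∈ cornersOf c ∧ v ∈ cornersOf c' := by
  simp only [cellSquare, Set.mem_Icc, Prod.le_def] at h h'
  have e₁ : c.1 ≤ c'.1 + 1 := by exact_mod_cast h.1.1.trans h'.2.1
  have e₂ : c'.1 ≤ c.1 + 1 := by exact_mod_cast h'.1.1.trans h.2.1
  have e₃ : c.2 ≤ c'.2 + 1 := by exact_mod_cast h.1.2.trans h'.2.2
  have e₄ : c'.2 ≤ c.2 + 1 := by exact_mod_cast h'.1.2.trans h.2.2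
  refine ⟨(max c.1 c'.1, max c.2 c'.2), ?_, ?_⟩ <;> rw [mem_cornersOf_iff] <;> omega

lemma eqvGen_edgeInDomain {D : Set Cell} (hfin : D.Finite)
    (hconn : IsPreconnected (regionOf D)) {v w : Vertex} (hv : IsVertexOf D v)
    (hw : IsVertexOf D w) : Relation.EqvGen (EdgeInDomain D) v w := by
  set G : Set Cell := {c ∈ D | ∃ p ∈ cornersOf c, Relation.EqvGen (EdgeInDomain D) v p}
  have linked : ∀ c ∈ G, ∀ p ∈ cornersOf c, Relation.EqvGen (EdgeInDomain D) v p :=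
    fun c ⟨hc, q, hq, hvq⟩ p hp => hvq.trans _ _ _ (eqvGen_of_mem_cornersOf hc hq hp)
  obtain ⟨cv, hcv, hvc⟩ := isVertexOf_iff.1 hv
  obtain ⟨cw, hcw, hwc⟩ := isVertexOf_iff.1 hw
  by_contra hvw
  have hcwG : cw ∉ G := fun hG => hvw (linked cw hG w hwc)
  -- the squares of the cells in `G` and those of the other cells would split the region
  -- into two disjoint nonempty closed sets
  have hclosed : ∀ s ⊆ D, IsClosed (⋃ c ∈ s, cellSquare c) := fun s hs =>
    (hfin.subset hs).isClosed_biUnion fun _ _ => isClosed_Icc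
  obtain ⟨x, -, hxG, hxG'⟩ := isPreconnected_closed_iff.1 hconn _ _
    (hclosed G fun _ hc => hc.1) (hclosed (D \ G) Set.sdiff_subset)
    (fun x hx => by
      obtain ⟨c, hc, hxc⟩ := Set.mem_iUnion₂.1 hx
      by_cases hcG : c ∈ G
      exacts [Or.inl (Set.mem_biUnion hcG hxc), Or.inr (Set.mem_biUnion ⟨hc, hcG⟩ hxc)])
    ⟨embedV v, hv, Set.mem_biUnion ⟨hcv, v, hvc, .refl _⟩ (embedV_mem_cellSquare_iff.2 hvc)⟩
    ⟨embedV w, hw, Set.mem_biUnion ⟨hcw, hcwG⟩ (embedV_mem_cellSquare_iff.2 hwc)⟩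
  obtain ⟨c, hcG, hxc⟩ := Set.mem_iUnion₂.1 hxG
  obtain ⟨c', ⟨hc'D, hc'G⟩, hxc'⟩ := Set.mem_iUnion₂.1 hxG'
  obtain ⟨p, hpc, hpc'⟩ := exists_mem_cornersOf_of_mem_cellSquare hxc hxc'
  exact hc'G ⟨hc'D, p, hpc', linked c hcG p hpc⟩

lemma apply_eq_of_edgeInDomain {β : Type*} {D : Set Cell} (hfin : D.Finite)
    (hconn : IsPreconnected (regionOf D)) {f : Vertex → β}
    (hf : ∀ v w, EdgeInDomain D v w → f v = f w) {v w : Vertex} (hv : IsVertexOf D v)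
    (hw : IsVertexOf D w) : f v = f w :=
  congrArg (Quot.lift f hf) (Quot.eqvGen_sound (eqvGen_edgeInDomain hfin hconn hv hw))

lemma IsInteriorVertexOf.mem_interior {D : Set Cell} {v : Vertex} (hv : IsInteriorVertexOf D v) :
    embedV v ∈ interior (regionOf D) := by
  rw [← self_sdiff_frontier]
  exact hv

lemma mem_of_mem_cornersOf_of_mem_interior {D : Set Cell} {c : Cell} {v : Vertex}
    (hc : v ∈ cornersOf c) (hv : embedV v ∈ interior (regionOf D)) : c ∈ D := by
  set openSquare : Set (ℝ × ℝ) :=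
    Set.Ioo (c.1 : ℝ) (c.1 + 1) ×ˢ Set.Ioo (c.2 : ℝ) (c.2 + 1)
  have hcl : embedV v ∈ closure openSquare := by
    rw [closure_prod_eq, closure_Ioo (by simp), closure_Ioo (by simp)]
    rw [mem_cornersOf_iff] at hc
    simp only [embedV, Set.mem_prod, Set.mem_Icc]
    norm_cast
    exact ⟨⟨hc.1, hc.2.1⟩, hc.2.2⟩
  obtain ⟨x, hxD, hx⟩ := mem_closure_iff_nhds.1 hcl _ (mem_interior_iff_mem_nhds.1 hv)
  obtain ⟨c', hc', hxc'⟩ := Set.mem_iUnion₂.1 hxD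
  simp only [cellSquare, Set.mem_Icc, Prod.le_def] at hxc'
  simp only [openSquare, Set.mem_prod, Set.mem_Ioo] at hx
  have e₁ : c'.1 < c.1 + 1 := by exact_mod_cast hxc'.1.1.trans_lt hx.1.2
  have e₂ : c.1 < c'.1 + 1 := by exact_mod_cast hx.1.1.trans_le hxc'.2.1
  have e₃ : c'.2 < c.2 + 1 := by exact_mod_cast hxc'.1.2.trans_lt hx.2.2
  have e₄ : c.2 < c'.2 + 1 := by exact_mod_cast hx.2.1.trans_le hxc'.2.2
  rwa [show c = c' by ext <;> omega]

def HasHeightSteps (D : Set Cell) (h : Vertex → ℤ) : Prop :=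
  ∀ v w, EdgeInDomain D v w → h w = h v - 3 ∨ h w = h v + 1

/-- Thurston's local characterization of the height functions of tilings of `D`. -/
structure IsAdmissibleHeight (D : Set Cell) (O : Vertex) (h : Vertex → ℤ) : Prop where
  apply_origin : h O = 0
  steps : HasHeightSteps D h
  exists_axis : ∀ v w, EdgeInDomain D v w → h w = h v - 3 → ∃ d ⊆ D, IsCentralAxis d v w

lemma HasHeightSteps.existsUnique_drop {D : Set Cell} {h : Vertex → ℤ} (hh : HasHeightSteps D h)
    {c : Cell} (hc : c ∈ D) : ∃! e : Vertex × Vertex,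
      e.1 ∈ cornersOf c ∧ e.2 ∈ cornersOf c ∧ IsDirEdge e.1 e.2 ∧ h e.2 = h e.1 - 3 := by
  obtain ⟨p₀, p₁, p₂, p₃, hcorners, hedge⟩ := cornersOf_cycle c
  have m₀ := (hcorners p₀).2 (by simp)
  have m₁ := (hcorners p₁).2 (by simp)
  have m₂ := (hcorners p₂).2 (by simp)
  have m₃ := (hcorners p₃).2 (by simp)
  have e₀ := (hedge _ m₀ _ m₁).2 (by simp)
  have e₁ := (hedge _ m₁ _ m₂).2 (by simp)
  have e₂ := (hedge _ m₂ _ m₃).2 (by simp)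
  have e₃ := (hedge _ m₃ _ m₀).2 (by simp)
  have s₀ := hh _ _ ⟨e₀, c, hc, m₀, m₁⟩
  have s₁ := hh _ _ ⟨e₁, c, hc, m₁, m₂⟩
  have s₂ := hh _ _ ⟨e₂, c, hc, m₂, m₃⟩
  have s₃ := hh _ _ ⟨e₃, c, hc, m₃, m₀⟩
  -- the four steps around the cell add up to `0`, so exactly one of them is a drop
  refine existsUnique_of_exists_of_unique ?_ ?_
  · have : h p₁ = h p₀ - 3 ∨ h p₂ = h p₁ - 3 ∨ h p₃ = h p₂ - 3 ∨ h p₀ = h p₃ - 3 := by omega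
    rcases this with hd | hd | hd | hd
    exacts [⟨(p₀, p₁), m₀, m₁, e₀, hd⟩, ⟨(p₁, p₂), m₁, m₂, e₁, hd⟩,
      ⟨(p₂, p₃), m₂, m₃, e₂, hd⟩, ⟨(p₃, p₀), m₃, m₀, e₃, hd⟩]
  · rintro ⟨v, w⟩ ⟨v', w'⟩ ⟨hv, hw, hvw, hd⟩ ⟨hv', hw', hvw', hd'⟩
    have hc := (hedge v hv w hw).1 hvw
    have hc' := (hedge v' hv' w' hw').1 hvw'
    simp only [Prod.mk.injEq] at hc hc' hd hd' ⊢
    rcases hc with ⟨rfl, rfl⟩ | ⟨rfl, rfl⟩ | ⟨rfl, rfl⟩ | ⟨rfl, rfl⟩ <;>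
      rcases hc' with ⟨rfl, rfl⟩ | ⟨rfl, rfl⟩ | ⟨rfl, rfl⟩ | ⟨rfl, rfl⟩ <;>
      first | exact ⟨rfl, rfl⟩ | omega

lemma IsHeightFunction.isAdmissibleHeight {D : Set Cell} {O : Vertex} {T : Set (Set Cell)}
    {h : Vertex → ℤ} (hT : IsTiling D T) (hh : IsHeightFunction D O T h) :
    IsAdmissibleHeight D O h where
  apply_origin := hh.1
  steps v w he := by
    by_cases hax : ∃ d ∈ T, IsCentralAxis d v w
    exacts [Or.inl ((hh.2 v w he).1 hax), Or.inr ((hh.2 v w he).2 hax)]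
  exists_axis v w he hdrop := by
    by_cases hax : ∃ d ∈ T, IsCentralAxis d v w
    · obtain ⟨d, hdT, hax⟩ := hax
      exact ⟨d, hT.2.2 ▸ Set.subset_sUnion_of_mem hdT, hax⟩
    · have := (hh.2 v w he).2 hax
      omega

def tilingOf (D : Set Cell) (h : Vertex → ℤ) : Set (Set Cell) :=
  {d | d ⊆ D ∧ ∃ v w, EdgeInDomain D v w ∧ h w = h v - 3 ∧ IsCentralAxis d v w}

lemma HasHeightSteps.pairwiseDisjoint_tilingOf {D : Set Cell} {h : Vertex → ℤ}
    (hh : HasHeightSteps D h) : (tilingOf D h).PairwiseDisjoint id := by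
  rintro d₁ ⟨hd₁, v₁, w₁, he₁, hdrop₁, hax₁⟩ d₂ ⟨-, v₂, w₂, he₂, hdrop₂, hax₂⟩ hne
  refine Set.disjoint_left.2 fun c hc₁ hc₂ => hne ?_
  obtain ⟨hv₁, hw₁⟩ := hax₁.mem_cornersOf hc₁
  obtain ⟨hv₂, hw₂⟩ := hax₂.mem_cornersOf hc₂
  obtain ⟨rfl, rfl⟩ := Prod.mk.inj <| (hh.existsUnique_drop (hd₁ hc₁)).unique
    (y₁ := (v₁, w₁)) ⟨hv₁, hw₁, he₁.1, hdrop₁⟩ ⟨hv₂, hw₂, he₂.1, hdrop₂⟩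
  exact hax₁.eq hax₂

lemma IsAdmissibleHeight.sUnion_tilingOf {D : Set Cell} {O : Vertex} {h : Vertex → ℤ}
    (hh : IsAdmissibleHeight D O h) : ⋃₀ tilingOf D h = D := by
  refine Set.Subset.antisymm (Set.sUnion_subset fun d hd => hd.1) fun c hc => ?_
  obtain ⟨⟨v, w⟩, ⟨hv, hw, hvw, hdrop⟩, -⟩ := hh.steps.existsUnique_drop hc
  have he : EdgeInDomain D v w := ⟨hvw, c, hc, hv, hw⟩
  obtain ⟨d, hdD, hax⟩ := hh.exists_axis v w he hdrop
  exact ⟨d, ⟨hdD, v, w, he, hdrop, hax⟩, hax.mem_of_mem_cornersOf hv hw⟩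

lemma IsAdmissibleHeight.isTiling_tilingOf {D : Set Cell} {O : Vertex} {h : Vertex → ℤ}
    (hh : IsAdmissibleHeight D O h) : IsTiling D (tilingOf D h) :=
  ⟨fun _ ⟨_, _, _, _, _, hax⟩ => hax.isDomino, hh.steps.pairwiseDisjoint_tilingOf,
    hh.sUnion_tilingOf⟩

lemma IsAdmissibleHeight.isHeightFunction_tilingOf {D : Set Cell} {O : Vertex}
    {h : Vertex → ℤ} (hh : IsAdmissibleHeight D O h) :
    IsHeightFunction D O (tilingOf D h) h := by
  refine ⟨hh.apply_origin, fun v w he => ⟨?_, fun hnot => ?_⟩⟩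
  · rintro ⟨d, ⟨-, v', w', he', hdrop, hax'⟩, hax⟩
    rcases Set.pair_eq_pair_iff.1 (hax.pair_eq hax') with ⟨rfl, rfl⟩ | ⟨rfl, rfl⟩
    · exact hdrop
    · exact absurd he.1 he'.1.not_symm
  · refine (hh.steps v w he).resolve_left fun hdrop => hnot ?_
    obtain ⟨d, hdD, hax⟩ := hh.exists_axis v w he hdrop
    exact ⟨d, ⟨hdD, v, w, he, hdrop, hax⟩, hax⟩

section Connected

variable {D : Set Cell} (hfin : D.Finite) (hconn : IsPreconnected (regionOf D)) {O : Vertex}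
  (hO : IsVertexOf D O)
include hfin hconn hO

lemma IsHeightFunction.apply_eq {T : Set (Set Cell)} {h h' : Vertex → ℤ}
    (hh : IsHeightFunction D O T h) (hh' : IsHeightFunction D O T h') {v : Vertex}
    (hv : IsVertexOf D v) : h v = h' v := by
  have := apply_eq_of_edgeInDomain (f := fun u => h u - h' u) hfin hconn
    (fun p q he => ?_) hv hO
  · have := hh.1; have := hh'.1; omega
  · by_cases hax : ∃ d ∈ T, IsCentralAxis d p q
    · have := (hh.2 p q he).1 hax; have := (hh'.2 p q he).1 hax; omega
    · have := (hh.2 p q he).2 hax; have := (hh'.2 p q he).2 hax; omega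

lemma HasHeightSteps.emod_four_eq {h₁ h₂ : Vertex → ℤ} (hh₁ : HasHeightSteps D h₁)
    (hh₂ : HasHeightSteps D h₂) (hO₁₂ : h₁ O = h₂ O) {v : Vertex} (hv : IsVertexOf D v) :
    h₁ v % 4 = h₂ v % 4 := by
  have := apply_eq_of_edgeInDomain (f := fun u => (h₁ u - h₂ u) % 4) hfin hconn
    (fun p q he => by have := hh₁ p q he; have := hh₂ p q he; omega) hv hO
  omega

lemma infClosed_isAdmissibleHeight : InfClosed {h | IsAdmissibleHeight D O h} := by
  intro h₁ hh₁ h₂ hh₂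
  have hmod : ∀ v w, EdgeInDomain D v w → h₁ v % 4 = h₂ v % 4 := fun v _ he =>
    hh₁.steps.emod_four_eq hfin hconn hO hh₂.steps (hh₁.1.trans hh₂.1.symm) he.isVertexOf.1
  -- at each vertex the two heights are equal or `4` apart, so along an edge the minimum
  -- follows one of them
  refine ⟨by simp [hh₁.1, hh₂.1], fun v w he => ?_, fun v w he hdrop => ?_⟩
  · have := hmod v w he; have := hh₁.steps v w he; have := hh₂.steps v w he
    simp only [Pi.inf_apply]
    omega
  · have := hmod v w he; have := hh₁.steps v w he; have := hh₂.steps v w he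
    simp only [Pi.inf_apply] at hdrop
    have : h₁ w = h₁ v - 3 ∨ h₂ w = h₂ v - 3 := by omega
    rcases this with hd | hd
    exacts [hh₁.exists_axis v w he hd, hh₂.exists_axis v w he hd]

end Connected

/-- Lowering a local maximum by `4` is the downward flip around it. -/
lemma IsAdmissibleHeight.update_of_isLocalMax {D : Set Cell} {O : Vertex} {h : Vertex → ℤ}
    (hO : IsBoundaryVertexOf D O) (hh : IsAdmissibleHeight D O h) {v : Vertex}
    (hmax : IsLocalMax D h v) : IsAdmissibleHeight D O (Function.update h v (h v - 4)) := by
  obtain ⟨hv, hlt⟩ := hmax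
  have hOv : O ≠ v := fun hOv => hv.2 (hOv ▸ hO.2)
  refine ⟨by rw [Function.update_of_ne hOv, hh.1], fun p q he => ?_, fun p q he hdrop => ?_⟩
  · obtain ⟨hpq, hqp⟩ := he.1.adjacent
    have := hh.steps p q he
    rcases eq_or_ne p v with rfl | hp
    · have := hlt q hpq
      simp only [Function.update_self, Function.update_of_ne hpq.ne]
      omega
    rcases eq_or_ne q v with rfl | hq
    · have := hlt p hqp
      simp only [Function.update_self, Function.update_of_ne hp]
      omega
    · simpa only [Function.update_of_ne hp, Function.update_of_ne hq] using this
  · by_cases hpq : p = v ∨ q = v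
    · obtain ⟨d, hax⟩ := he.1.adjacent.1.exists_isCentralAxis
      refine ⟨d, fun c hc => mem_of_mem_cornersOf_of_mem_interior ?_ hv.mem_interior, hax⟩
      rcases hpq with rfl | rfl
      exacts [(hax.mem_cornersOf hc).1, (hax.mem_cornersOf hc).2]
    · push Not at hpq
      simp only [Function.update_of_ne hpq.1, Function.update_of_ne hpq.2] at hdrop
      exact hh.exists_axis p q he hdrop

lemma finite_setOf_isTiling {D : Set Cell} (hfin : D.Finite) : {T | IsTiling D T}.Finite :=
  hfin.finite_subsets.finite_subsets.subset fun _ hT _ hd =>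
    hT.2.2 ▸ Set.subset_sUnion_of_mem hd

lemma IsDomain.isPreconnected {D : Set Cell} (hD : IsDomain D) : IsPreconnected (regionOf D) :=
  haveI := hD.simplyConnected
  (isConnected_iff_connectedSpace.2 inferInstance).isPreconnected

lemma exists_least_admissibleHeight {D : Set Cell} (hfin : D.Finite)
    (hconn : IsPreconnected (regionOf D)) {O : Vertex} (hO : IsVertexOf D O) {S : Set Vertex}
    {g : Vertex → ℤ}
    (hex : ∃ T h, IsTiling D T ∧ IsHeightFunction D O T h ∧ ∀ v ∈ S, h v = g v) :
    ∃ hs, IsAdmissibleHeight D O hs ∧ (∀ v ∈ S, hs v = g v) ∧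
      ∀ T, IsTiling D T → (∃ h, IsHeightFunction D O T h ∧ ∀ v ∈ S, h v = g v) →
        ∀ h, IsHeightFunction D O T h → ∀ v, IsVertexOf D v → hs v ≤ h v := by
  classical
  set 𝒯 := {T | IsTiling D T ∧ ∃ h, IsHeightFunction D O T h ∧ ∀ v ∈ S, h v = g v}
  have h𝒯 : 𝒯.Finite := (finite_setOf_isTiling hfin).subset fun _ hT => hT.1
  choose! H hH using fun T (hT : T ∈ 𝒯) => hT.2
  obtain ⟨T₀, hT₀⟩ : 𝒯.Nonempty := let ⟨T, h, hT, hh, hS⟩ := hex; ⟨T, hT, h, hh, hS⟩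
  set hs := h𝒯.toFinset.inf' ⟨T₀, h𝒯.mem_toFinset.2 hT₀⟩ H
  have h𝒜 : InfClosed ({h | IsAdmissibleHeight D O h} ∩ {h | ∀ v ∈ S, h v = g v}) :=
    (infClosed_isAdmissibleHeight hfin hconn hO).inter fun h₁ h₁S h₂ h₂S v hv => by
      simp [h₁S v hv, h₂S v hv]
  obtain ⟨hs_adm, hs_S⟩ : IsAdmissibleHeight D O hs ∧ ∀ v ∈ S, hs v = g v :=
    h𝒜.finsetInf'_mem _ fun T hT =>
      have hT := h𝒯.mem_toFinset.1 hT
      ⟨(hH T hT).1.isAdmissibleHeight hT.1, (hH T hT).2⟩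
  refine ⟨hs, hs_adm, hs_S, fun T hT hTS h hh v hv => ?_⟩
  exact (Finset.inf'_le H (h𝒯.mem_toFinset.2 ⟨hT, hTS⟩) v).trans_eq
    ((hH T ⟨hT, hTS⟩).1.apply_eq hfin hconn hO hh hv)

theorem constrained_minimal_tiling_general
    (D : Set Cell) (hD : IsDomain D)
    (O : Vertex) (hO : IsBoundaryVertexOf D O)
    (S : Set Vertex)
    (g : Vertex → ℤ)
    (hex : ∃ (T : Set (Set Cell)) (h : Vertex → ℤ),
      IsTiling D T ∧ IsHeightFunction D O T h ∧ ∀ v ∈ S, h v = g v) :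
    ∃ (TS : Set (Set Cell)) (hs : Vertex → ℤ),
      IsTiling D TS ∧ IsHeightFunction D O TS hs ∧ (∀ v ∈ S, hs v = g v) ∧
      (∀ T : Set (Set Cell), IsTiling D T →
        (∃ h : Vertex → ℤ, IsHeightFunction D O T h ∧ ∀ v ∈ S, h v = g v) →
        TilingLE D O TS T) ∧
      (∀ v : Vertex, v ∉ S → ¬ IsLocalMax D hs v) := by
  have hconn := hD.isPreconnected
  obtain ⟨hs, hs_adm, hs_S, hs_le⟩ := exists_least_admissibleHeight hD.finite hconn hO.1 hex
  refine ⟨tilingOf D hs, hs, hs_adm.isTiling_tilingOf, hs_adm.isHeightFunction_tilingOf, hs_S,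
    fun T hT hTS h₁ h₂ hh₁ hh₂ v hv => ?_, fun v hvS hmax => ?_⟩
  · rw [hh₁.apply_eq hD.finite hconn hO.1 hs_adm.isHeightFunction_tilingOf hv]
    exact hs_le T hT hTS h₂ hh₂ v hv
  · have hlow := hs_adm.update_of_isLocalMax hO hmax
    have := hs_le _ hlow.isTiling_tilingOf ⟨_, hlow.isHeightFunction_tilingOf, fun w hw => by
      rw [Function.update_of_ne (ne_of_mem_of_not_mem hw hvS), hs_S w hw]⟩ _
      hlow.isHeightFunction_tilingOf v hmax.1.1
    rw [Function.update_self] at this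
    omega

/-- constrained minimal tilings: if some tiling realizes the
prescribed heights `g` on a set `S` of interior vertices, then there is a
smallest such tiling, and its height function has no local maximum at any
interior vertex outside `S`. -/
theorem constrained_minimal_tiling
    (D : Set Cell) (hD : IsDomain D)
    (O : Vertex) (hO : IsBoundaryVertexOf D O)
    (S : Set Vertex) (hS : ∀ v ∈ S, IsInteriorVertexOf D v)
    (g : Vertex → ℤ)
    (hex : ∃ (T : Set (Set Cell)) (h : Vertex → ℤ),
      IsTiling D T ∧ IsHeightFunction D O T h ∧ ∀ v ∈ S, h v = g v) :
    ∃ (TS : Set (Set Cell)) (hs : Vertex → ℤ),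
      IsTiling D TS ∧ IsHeightFunction D O TS hs ∧ (∀ v ∈ S, hs v = g v) ∧
      (∀ T : Set (Set Cell), IsTiling D T →
        (∃ h : Vertex → ℤ, IsHeightFunction D O T h ∧ ∀ v ∈ S, h v = g v) →
        TilingLE D O TS T) ∧
      (∀ v : Vertex, v ∉ S → ¬ IsLocalMax D hs v) :=
  constrained_minimal_tiling_general D hD O hO S g hex

end DominoTiling
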